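/- arXiv:1606.06039 — 5 statements merged into one kernel-verified Lean document; each statement's English description precedes it below -/
import Mathlib

section
/- For all real P ≥ 0, c > 0, and α ∈ [0,1] with ᾱ = 1 − α, if c² ≥ P + 1 then the choice α = 0 maximizes the lower bound R(α) = (1/2)·log(1 + αP/(1 + ᾱP + c²)) + (1/4)·log(ᾱP + 1) − (1/2)·log 2 over α ∈ [0,1], and the maximum value is (1/4)·log(1 + P) − (1/2)·log 2. -/
open Real

theorem stmt_1 (P c : ℝ) (hP : 0 ≤ P) (hc : 0 < c) (hc2 : P + 1 ≤ c^2) :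
    (∀ α ∈ Set.Icc (0:ℝ) 1,
      (1/2) * Real.log (1 + α * P / (1 + (1 - α) * P + c^2))
        + (1/4) * Real.log ((1 - α) * P + 1) - (1/2) * Real.log 2
        ≤ (1/4) * Real.log (1 + P) - (1/2) * Real.log 2) ∧
    (1/2) * Real.log (1 + (0:ℝ) * P / (1 + (1 - 0) * P + c^2))
        + (1/4) * Real.log ((1 - (0:ℝ)) * P + 1) - (1/2) * Real.log 2
      = (1/4) * Real.log (1 + P) - (1/2) * Real.log 2 := by
  have hc2' : (0:ℝ) < c^2 := by positivity
  constructor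
  · intro α hα
    obtain ⟨h0, h1⟩ := hα
    have ht : 0 ≤ α * P := mul_nonneg h0 hP
    have hq : 0 ≤ (1 - α) * P := mul_nonneg (by linarith) hP
    have hDpos : 0 < 1 + (1 - α) * P + c^2 := by linarith
    have hNpos : (0:ℝ) < 1 + P + c^2 := by linarith
    have hApos : (0:ℝ) < (1 - α) * P + 1 := by linarith
    have hPpos : (0:ℝ) < 1 + P := by linarith
    have hN : (1:ℝ) + α * P / (1 + (1 - α) * P + c^2)
        = (1 + P + c^2) / (1 + (1 - α) * P + c^2) := by
      field_simp; ring
    have hsub : 0 ≤ c^2 * c^2 - ((1 - α) * P + 1) * (1 + P) := by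
      nlinarith
    have key : (1 + P + c^2)^2 * ((1 - α) * P + 1)
        ≤ (1 + P) * (1 + (1 - α) * P + c^2)^2 := by
      nlinarith [mul_nonneg ht hsub]
    have hlog := Real.log_le_log (by positivity) key
    rw [Real.log_mul (by positivity) (ne_of_gt hApos),
        Real.log_mul (ne_of_gt hPpos) (by positivity),
        Real.log_pow, Real.log_pow] at hlog
    rw [hN, Real.log_div (ne_of_gt hNpos) (ne_of_gt hDpos)]
    push_cast at hlog
    linarith
  · have hD : (0:ℝ) < 1 + (1 - 0) * P + c^2 := by linarith
    rw [zero_mul, zero_div, add_zero, Real.log_one]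
    norm_num
    ring_nf
end

section
/- Let c > 2 and positive reals α₁ < α₂ < α₃ satisfy α₁ ≥ 1/(c−1), α₂ ≥ c·α₁, α₃ ≥ c·α₂. Then c²·(α₃ − α₁)²/(2 + c²(α₂ − α₁)²) ≥ c²/2 − 1, equivalently 1 + c²(α₃−α₁)²/(2 + c²(α₂−α₁)²) ≥ c²/2. -/
open Real

set_option maxHeartbeats 2000000 in
theorem stmt_9 (c α₁ α₂ α₃ : ℝ) (hc : 2 < c) (h0 : 0 < α₁) (h12 : α₁ < α₂) (h23 : α₂ < α₃)
    (h1 : 1 / (c - 1) ≤ α₁) (h2 : c * α₁ ≤ α₂) (h3 : c * α₂ ≤ α₃) :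
    c^2 / 2 - 1 ≤ c^2 * (α₃ - α₁)^2 / (2 + c^2 * (α₂ - α₁)^2) ∧
    c^2 / 2 ≤ 1 + c^2 * (α₃ - α₁)^2 / (2 + c^2 * (α₂ - α₁)^2) := by
  have hc1 : (0:ℝ) < c - 1 := by linarith
  have hc0 : (0:ℝ) < c := by linarith
  -- abbreviations
  set s : ℝ := (c - 1) * α₂ with hs
  set u : ℝ := α₂ - c * α₁ with hu
  set v : ℝ := (c - 1) * α₁ with hv
  have hu0 : 0 ≤ u := by rw [hu]; linarith
  have hv0 : 0 ≤ v := by rw [hv]; positivity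
  have hsc : c ≤ s := by
    have h1' : 1 ≤ (c - 1) * α₁ := by
      rw [div_le_iff₀ hc1] at h1; linarith
    rw [hs]; nlinarith [h2, h1']
  have hsc0 : 0 ≤ s - c := by linarith
  have hS : s + (α₂ - α₁) ≤ α₃ - α₁ := by rw [hs]; nlinarith [h3]
  have hSpos : (0:ℝ) ≤ s + (α₂ - α₁) := by rw [hs]; nlinarith
  have e2 : (s + (α₂ - α₁))^2 ≤ (α₃ - α₁)^2 := by nlinarith [hS, hSpos]
  have H0 : 0 ≤ 2*c^3*(c-1) * ((α₃ - α₁)^2 - (s + (α₂ - α₁))^2) := by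
    have : (0:ℝ) ≤ 2*c^3*(c-1) := by positivity
    exact mul_nonneg this (by linarith)
  have H1 : 0 ≤ c^2*(c-1)*(c+2)^2 * ((s - c) * v) := by
    exact mul_nonneg (by positivity) (mul_nonneg hsc0 hv0)
  have H2 : 0 ≤ c^3*(c^2+2) * ((s - c) * u) := by
    exact mul_nonneg (by positivity) (mul_nonneg hsc0 hu0)
  have H3 : 0 ≤ c^2*(c^2-4) * (u * v) := by
    have : (0:ℝ) ≤ c^2 - 4 := by nlinarith
    exact mul_nonneg (by positivity) (mul_nonneg hu0 hv0)
  have H4 : 0 ≤ 2*(c-1)*(c^2-2) * (s - c) := by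
    have h2' : (0:ℝ) ≤ c^2 - 2 := by nlinarith
    exact mul_nonneg (by positivity) hsc0
  have H5 : 0 ≤ (c*(c-1)*(c^2*(c+2)^2 - 2*(c^2-2))) * v := by
    have : (0:ℝ) ≤ c^2*(c+2)^2 - 2*(c^2-2) := by nlinarith
    exact mul_nonneg (by positivity) hv0
  have H6 : 0 ≤ (c^4*(c^2+2) - 2*(c-1)^2*(c^2-2)) * u := by
    have hcc : (0:ℝ) < c^2 - 2 := by nlinarith
    have : (0:ℝ) ≤ c^4*(c^2+2) - 2*(c-1)^2*(c^2-2) := by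
      nlinarith [mul_pos hc0 hcc, pow_pos hc0 6, sq_nonneg c]
    exact mul_nonneg this hu0
  have hD : (0:ℝ) < 2 + c^2 * (α₂ - α₁)^2 := by positivity
  have key : c^2 / 2 - 1 ≤ c^2 * (α₃ - α₁)^2 / (2 + c^2 * (α₂ - α₁)^2) := by
    rw [le_div_iff₀ hD]
    have hk : (0:ℝ) < 2*c*(c-1) := by positivity
    have hmain : 0 ≤ 2*c*(c-1) * (c^2 * (α₃ - α₁)^2 - (c^2/2 - 1) * (2 + c^2 * (α₂ - α₁)^2)) := by
      rw [hs] at H0 H1 H2 H4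
      rw [hu] at H2 H3 H6
      rw [hv] at H1 H3 H5
      linarith [H0, H1, H2, H3, H4, H5, H6]
    have := (mul_nonneg_iff_of_pos_left hk).mp hmain
    linarith
  exact ⟨key, by linarith⟩
end

section
/- Let A be a geometric random variable: P[A = kΔ] = (1−q)^k · q for k ∈ ℕ, with q ≥ 1/2 and Δ = q/√(1−q) (so Var(A) = 1). Let m = 0 be its mode, Q_m = q, and μ = E[A] = Δ(1−q)/q = √(1−q). Then the quantity G_m = (1/2)·E[ log₂( (1+μ²)/((A−m)²) ) | A ≠ m ] + 3 satisfies G_m ≤ 3.15. -/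
/-!
Put `p = 1 - q` and `c = (1 + p) p / q²`. Since `log₂ (c / (k+1)²) = log₂ c - 2 log₂ (k+1)`, the series
equals `log₂ c - 2q ∑ pᵏ log₂ (k+1)`. Dropping the second term (the bound from `|A - m| ≥ Δ`) only
gives `3 + ½ log₂ 3` at `q = 1/2`, so it has to be kept: it is bounded below by its first seven terms,
using `log₂ n ≥ m/2` whenever `2ᵐ ≤ n²`. On the other side `log c` is bounded above by tangent lines
of `log` and a chord of `log` on `[1/2, 1]`, which leaves a polynomial inequality on `0 < p ≤ 1/2`.
-/

open Real

lemma summable_pow_mul_logb_succ (b : ℝ) {p : ℝ} (hp0 : 0 ≤ p) (hp1 : p < 1) :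
    Summable fun k : ℕ => p ^ k * logb b (k + 1) := by
  have hlog : Summable fun k : ℕ => p ^ k * log (k + 1) := by
    refine .of_nonneg_of_le (fun k => mul_nonneg (pow_nonneg hp0 k) (log_nonneg (by simp)))
      (fun k => ?_)
      (summable_pow_mul_geometric_of_norm_lt_one 1 (by rwa [norm_of_nonneg hp0]))
    have := log_le_sub_one_of_pos (by positivity : (0 : ℝ) < k + 1)
    nlinarith [pow_nonneg hp0 k]
  simpa only [logb, mul_div_assoc] using hlog.div_const (log b)

lemma tsum_geometric_mul_logb_div_sq (b : ℝ) {c q : ℝ} (hc : 0 < c) (hq0 : 0 < q) (hq1 : q ≤ 1) :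
    ∑' k : ℕ, (1 - q) ^ k * q * logb b (c / (k + 1) ^ 2)
      = logb b c - 2 * q * ∑' k : ℕ, (1 - q) ^ k * logb b (k + 1) := by
  have hgeo := summable_geometric_of_lt_one (sub_nonneg.2 hq1) (by linarith : 1 - q < 1)
  have hlog := summable_pow_mul_logb_succ b (sub_nonneg.2 hq1) (by linarith : 1 - q < 1)
  have hsummand : ∀ k : ℕ, (1 - q) ^ k * q * logb b (c / (k + 1) ^ 2)
      = logb b c * q * (1 - q) ^ k - 2 * q * ((1 - q) ^ k * logb b (k + 1)) := by
    intro k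
    rw [logb_div hc.ne' (by positivity), logb_pow]
    push_cast
    ring
  rw [tsum_congr hsummand, (hgeo.mul_left _).tsum_sub (hlog.mul_left _), tsum_mul_left,
    tsum_mul_left, tsum_geometric_of_lt_one (sub_nonneg.2 hq1) (by linarith), sub_sub_cancel,
    mul_inv_cancel_right₀ hq0.ne']

lemma half_le_logb_two_of_two_pow_le_sq {m n : ℕ} (h : 2 ^ m ≤ n ^ 2) :
    (m : ℝ) / 2 ≤ logb 2 n := by
  have : logb 2 ((2 : ℝ) ^ m) ≤ logb 2 ((n : ℝ) ^ 2) :=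
    logb_le_logb_of_le one_lt_two (by positivity) (by exact_mod_cast h)
  rw [logb_pow, logb_pow, logb_self_eq_one one_lt_two] at this
  push_cast at this
  linarith

lemma le_tsum_pow_mul_logb_two_succ {p : ℝ} (hp0 : 0 ≤ p) (hp1 : p < 1) :
    p + 3 / 2 * p ^ 2 + 2 * p ^ 3 + 2 * p ^ 4 + 5 / 2 * p ^ 5 + 5 / 2 * p ^ 6
      ≤ ∑' k : ℕ, p ^ k * logb 2 (k + 1) := by
  have hnonneg : ∀ k : ℕ, 0 ≤ p ^ k * logb 2 (k + 1) := fun k =>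
    mul_nonneg (pow_nonneg hp0 k) (logb_nonneg one_lt_two (by simp))
  refine le_trans ?_ ((summable_pow_mul_logb_succ 2 hp0 hp1).sum_le_tsum (Finset.range 7)
    fun k _ => hnonneg k)
  have bound : ∀ m n : ℕ, 2 ^ m ≤ n ^ 2 → ∀ j : ℕ,
      p ^ j * ((m : ℝ) / 2) ≤ p ^ j * logb 2 n := fun m n h j =>
    mul_le_mul_of_nonneg_left (half_le_logb_two_of_two_pow_le_sq h) (pow_nonneg hp0 j)
  simp only [Finset.sum_range_succ, Finset.sum_range_zero]
  have := bound 2 2 (by norm_num) 1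
  have := bound 3 3 (by norm_num) 2
  have := bound 4 4 (by norm_num) 3
  have := bound 4 5 (by norm_num) 4
  have := bound 5 6 (by norm_num) 5
  have := bound 5 7 (by norm_num) 6
  norm_num at *
  linarith [hnonneg 0]

lemma log_le_log_add_div_sub_one {a x : ℝ} (ha : 0 < a) (hx : 0 < x) :
    log x ≤ log a + x / a - 1 := by
  have := log_le_sub_one_of_pos (div_pos hx ha)
  rw [log_div hx.ne' ha.ne'] at this
  linarith

lemma log_three_halves_le : log (3 / 2) ≤ 1 / 16 + log 2 / 2 := by
  have h := log_le_log_add_div_sub_one (by norm_num : (0 : ℝ) < 2) (by norm_num : (0 : ℝ) < 9 / 4)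
  rw [show (9 / 4 : ℝ) = (3 / 2) ^ 2 by norm_num, log_pow] at h
  norm_num at h
  linarith

lemma neg_two_mul_log_two_mul_le_log_one_sub {p : ℝ} (hp0 : 0 ≤ p) (hp : p ≤ 1 / 2) :
    -(2 * log 2 * p) ≤ log (1 - p) := by
  have h := strictConcaveOn_log_Ioi.concaveOn.2 (show (1 / 2 : ℝ) ∈ Set.Ioi 0 by norm_num)
    (show (1 : ℝ) ∈ Set.Ioi 0 by norm_num) (by positivity : 0 ≤ 2 * p) (by linarith : 0 ≤ 1 - 2 * p)
    (by ring)
  simp only [smul_eq_mul, log_one, one_div, log_inv] at h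
  rw [show 2 * p * 2⁻¹ + (1 - 2 * p) * 1 = 1 - p by ring] at h
  linarith

lemma log_one_add_mul_div_one_sub_sq_le {p : ℝ} (hp0 : 0 < p) (hp : p ≤ 1 / 2) :
    log ((1 + p) * p / (1 - p) ^ 2) ≤ 8 / 3 * p - 61 / 48 + log 2 * (4 * p - 1 / 2) := by
  rw [log_div (by positivity) (by nlinarith), log_mul (by positivity) hp0.ne', log_pow]
  have h1 := log_le_log_add_div_sub_one (by norm_num : (0 : ℝ) < 3 / 2) (by positivity : 0 < 1 + p)
  have h2 := log_le_log_add_div_sub_one (by norm_num : (0 : ℝ) < 1 / 2) hp0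
  have h3 := neg_two_mul_log_two_mul_le_log_one_sub hp0.le hp
  rw [one_div, log_inv, div_inv_eq_mul] at h2
  rw [div_div_eq_mul_div] at h1
  push_cast
  linarith [log_three_halves_le]

lemma logb_two_one_add_mul_div_one_sub_sq_le {p : ℝ} (hp0 : 0 < p) (hp : p ≤ 1 / 2) :
    logb 2 ((1 + p) * p / (1 - p) ^ 2) ≤ 3 / 10 + 2 * (1 - p) *
      (p + 3 / 2 * p ^ 2 + 2 * p ^ 3 + 2 * p ^ 4 + 5 / 2 * p ^ 5 + 5 / 2 * p ^ 6) := by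
  set G := 4 / 5 - 4 * p + 2 * (1 - p) *
    (p + 3 / 2 * p ^ 2 + 2 * p ^ 3 + 2 * p ^ 4 + 5 / 2 * p ^ 5 + 5 / 2 * p ^ 6) with hG
  have hslack : ∀ k : ℕ, 0 ≤ p ^ k * (1 / 2 - p) := fun k =>
    mul_nonneg (pow_nonneg hp0.le k) (sub_nonneg.2 hp)
  have hG_nonneg : 0 ≤ G := by
    nlinarith [hslack 1, hslack 2, hslack 3, hslack 4, hslack 5, pow_nonneg hp0.le 6,
      sq_nonneg (p - 1 / 4)]
  have hpoly : 8 / 3 * p - 61 / 48 ≤ 0.6931 * G := by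
    nlinarith [hslack 1, hslack 2, hslack 3, hslack 4, hslack 5, pow_nonneg hp0.le 6,
      sq_nonneg (p - 1 / 4)]
  have hlog2 : 0.6931 * G ≤ log 2 * G :=
    mul_le_mul_of_nonneg_right (by linarith [log_two_gt_d9]) hG_nonneg
  rw [hG] at hpoly hlog2
  rw [logb, div_le_iff₀ (log_pos one_lt_two)]
  linarith [log_one_add_mul_div_one_sub_sq_le hp0 hp]

theorem stmt_10 (q : ℝ) (hq1 : 1/2 ≤ q) (hq2 : q < 1) :
    (1/2) * (∑' k : ℕ, (1 - q)^k * q *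
        Real.logb 2 ((1 + (Real.sqrt (1 - q))^2) /
          (((k + 1 : ℝ) * (q / Real.sqrt (1 - q)))^2))) + 3 ≤ 3.15 := by
  have hp0 : 0 < 1 - q := by linarith
  have harg : ∀ k : ℕ, (1 + √(1 - q) ^ 2) / ((k + 1 : ℝ) * (q / √(1 - q))) ^ 2
      = (1 + (1 - q)) * (1 - q) / q ^ 2 / (k + 1) ^ 2 := by
    intro k
    rw [mul_pow, div_pow, sq_sqrt hp0.le]
    field_simp
  rw [tsum_congr fun k => by rw [harg k], tsum_geometric_mul_logb_div_sq 2
    (div_pos (mul_pos (by linarith) hp0) (by positivity)) (by linarith) hq2.le]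
  have hc := logb_two_one_add_mul_div_one_sub_sq_le hp0 (by linarith)
  have hT := mul_le_mul_of_nonneg_left (le_tsum_pow_mul_logb_two_succ hp0.le (by linarith))
    (by linarith : 0 ≤ q)
  rw [sub_sub_cancel] at hc
  linarith
end

section
/- Let c > 2 and consider positive reals Δ₁, …, Δ_{M−1} with Δ_i = α_{i+1} − α₁ where α₁ ≥ 1/(c−1) and α_{i+1} ≥ c·α_i for all i. Then for every i ∈ {1, …, M−1}: (c²·Σ_{j=1}^{i} Δ_j² + 2)/(c²·Σ_{j=1}^{i−1} Δ_j² + 2) ≥ c²/4, so that (1/2)·log(2·(c²Σ_{j≤i}Δ_j² + 2)/(c²Σ_{j≤i−1}Δ_j² + 2)) ≥ (1/2)·log(c²/2). -/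
/-!
Write `Δ_j = α (j+1) - α 1`. The growth condition gives `Δ_{j+1} ≥ c Δ_j + (c - 1) α₁ ≥ c Δ_j`
and `Δ_1 ≥ (c - 1) α₁ ≥ 1`, so squares grow by a factor `c²` and each new square dominates all
the previous ones: `(c² - 1) Σ_{j ≤ i-1} Δ_j² + 1 ≤ Δ_i²`. With this the ratio bound is a
polynomial inequality, and the logarithmic bound follows by monotonicity of `log`.
-/

open Real Finset

section Geometric

variable {c : ℝ} {x : ℕ → ℝ} {N : ℕ}

lemma nonneg_of_mul_le_succ (hc : 0 ≤ c) (h1 : 0 ≤ x 1)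
    (hx : ∀ k, 1 ≤ k → k < N → c * x k ≤ x (k + 1)) :
    ∀ k, 1 ≤ k → k ≤ N → 0 ≤ x k := by
  intro k hk hkN
  induction k, hk using Nat.le_induction with
  | base => exact h1
  | succ k hk ih =>
    have := ih (by omega)
    nlinarith [hx k hk (by omega)]

lemma sum_sq_mul_add_one_le_sq (hc : 0 ≤ c) (h1 : 1 ≤ x 1)
    (hx : ∀ k, 1 ≤ k → k < N → c * x k ≤ x (k + 1)) :
    ∀ k, k + 1 ≤ N → (c ^ 2 - 1) * ∑ j ∈ Icc 1 k, x j ^ 2 + 1 ≤ x (k + 1) ^ 2 := by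
  have hnonneg := nonneg_of_mul_le_succ hc (zero_le_one.trans h1) hx
  intro k hkN
  induction k with
  | zero => simpa using one_le_pow₀ (n := 2) h1
  | succ k ih =>
    have hxk : 0 ≤ c * x (k + 1) := mul_nonneg hc (hnonneg _ (by omega) (by omega))
    have hsq : (c * x (k + 1)) ^ 2 ≤ x (k + 2) ^ 2 :=
      pow_le_pow_left₀ hxk (hx (k + 1) (by omega) (by omega)) 2
    rw [sum_Icc_succ_top (by omega)]
    nlinarith [ih (by omega)]

end Geometric

lemma sq_div_four_le_ratio_of_le_sq (c S d : ℝ) (hS : 0 ≤ S) (hd : (c ^ 2 - 1) * S + 1 ≤ d ^ 2) :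
    c ^ 2 / 4 ≤ (c ^ 2 * (S + d ^ 2) + 2) / (c ^ 2 * S + 2) := by
  have hden : 0 < c ^ 2 * S + 2 := by positivity
  rw [le_div_iff₀ hden]
  nlinarith [mul_le_mul_of_nonneg_left hd (sq_nonneg c), mul_nonneg (sq_nonneg c) hS,
    mul_nonneg (pow_nonneg (sq_nonneg c) 2) hS]

theorem stmt_15_general (c : ℝ) (hc : 2 < c) (M : ℕ) (α : ℕ → ℝ)
    (h1 : 1 / (c - 1) ≤ α 1)
    (hgrow : ∀ i, 1 ≤ i → i ≤ M - 1 → c * α i ≤ α (i+1)) :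
    ∀ i, 1 ≤ i → i ≤ M - 1 →
      c^2 / 4 ≤ (c^2 * (∑ j ∈ Finset.Icc 1 i, (α (j+1) - α 1)^2) + 2) /
                (c^2 * (∑ j ∈ Finset.Icc 1 (i-1), (α (j+1) - α 1)^2) + 2) ∧
      (1/2) * Real.log (c^2 / 2)
        ≤ (1/2) * Real.log (2 * ((c^2 * (∑ j ∈ Finset.Icc 1 i, (α (j+1) - α 1)^2) + 2) /
                (c^2 * (∑ j ∈ Finset.Icc 1 (i-1), (α (j+1) - α 1)^2) + 2))) := by
  have hα1 : 1 ≤ (c - 1) * α 1 := by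
    rwa [div_le_iff₀' (by linarith)] at h1
  have hΔgrow : ∀ k, 1 ≤ k → k < M - 1 →
      c * (α (k + 1) - α 1) ≤ α (k + 1 + 1) - α 1 := fun k hk hkM => by
    nlinarith [hgrow (k + 1) (by omega) (by omega)]
  rintro _ hi hiM
  have hΔ1 : 1 ≤ α (1 + 1) - α 1 := by nlinarith [hgrow 1 le_rfl (by omega)]
  obtain ⟨k, rfl⟩ : ∃ k, _ = k + 1 := ⟨_, (Nat.succ_pred_eq_of_pos hi).symm⟩
  have hkey := sum_sq_mul_add_one_le_sq (by linarith) hΔ1 hΔgrow k hiM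
  rw [Nat.add_sub_cancel, sum_Icc_succ_top (by omega)]
  have hratio := sq_div_four_le_ratio_of_le_sq c _ _ (sum_nonneg fun j _ => sq_nonneg _) hkey
  refine ⟨hratio, ?_⟩
  gcongr
  linarith

theorem stmt_15 (c : ℝ) (hc : 2 < c) (M : ℕ) (hM : 2 ≤ M) (α : ℕ → ℝ)
    (hpos : 0 < α 1) (h1 : 1 / (c - 1) ≤ α 1)
    (hgrow : ∀ i, 1 ≤ i → i ≤ M - 1 → c * α i ≤ α (i+1)) :
    ∀ i, 1 ≤ i → i ≤ M - 1 →
      c^2 / 4 ≤ (c^2 * (∑ j ∈ Finset.Icc 1 i, (α (j+1) - α 1)^2) + 2) /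
                (c^2 * (∑ j ∈ Finset.Icc 1 (i-1), (α (j+1) - α 1)^2) + 2) ∧
      (1/2) * Real.log (c^2 / 2)
        ≤ (1/2) * Real.log (2 * ((c^2 * (∑ j ∈ Finset.Icc 1 i, (α (j+1) - α 1)^2) + 2) /
                (c^2 * (∑ j ∈ Finset.Icc 1 (i-1), (α (j+1) - α 1)^2) + 2))) :=
  stmt_15_general c hc M α h1 hgrow
end

section
/- For all P ≥ 0, μ ∈ ℝ, c ∈ ℝ with Q̄ ≥ Q·c²(1+μ²) where Q ∈ [1/2,1], Q̄ = 1−Q, the inner bound (1/2)·log(1 + P/(1 + c²(1+μ²))) and outer bound (1/2)·log(1+P) + log 2 (in nats) satisfy: outer − inner ≤ (1/2)·log(1 + c²(1+μ²)) + log 2 ≤ (1/2)·log(1 + 1/(Q)) + log 2 ≤ (1/2)·log 3 + log 2. -/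
open Real

theorem stmt_19 (P μA c Q : ℝ) (hP : 0 ≤ P) (hQ : Q ∈ Set.Icc (1/2 : ℝ) 1)
    (hcond : Q * (c^2 * (1 + μA^2)) ≤ 1 - Q) :
    (((1/2) * Real.log (1 + P) + Real.log 2)
        - (1/2) * Real.log (1 + P / (1 + c^2 * (1 + μA^2)))
      ≤ (1/2) * Real.log (1 + c^2 * (1 + μA^2)) + Real.log 2) ∧
    ((1/2) * Real.log (1 + c^2 * (1 + μA^2)) + Real.log 2
      ≤ (1/2) * Real.log (1 + 1/Q) + Real.log 2) ∧
    ((1/2) * Real.log (1 + 1/Q) + Real.log 2 ≤ (1/2) * Real.log 3 + Real.log 2) := by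
  obtain ⟨hQ1, hQ2⟩ := hQ
  have hQpos : 0 < Q := by linarith
  set v := c^2 * (1 + μA^2) with hv
  have hv0 : 0 ≤ v := by positivity
  have h1v : (0:ℝ) < 1 + v := by linarith
  refine ⟨?_, ?_, ?_⟩
  · have key : Real.log (1 + P) ≤ Real.log (1 + v) + Real.log (1 + P / (1 + v)) := by
      rw [← Real.log_mul (by linarith) (by positivity)]
      apply Real.log_le_log (by linarith)
      have : (1 + v) * (1 + P / (1 + v)) = 1 + v + P := by
        field_simp
      rw [this]; linarith
    linarith
  · have hvle : v ≤ 1/Q - 1 := by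
      rw [le_sub_iff_add_le, le_div_iff₀ hQpos]
      nlinarith
    have : 1 + v ≤ 1 + 1/Q := by linarith [one_div_nonneg.mpr hQpos.le]
    have := Real.log_le_log h1v this
    linarith
  · have h3 : 1 + 1/Q ≤ 3 := by
      have : 1/Q ≤ 2 := by rw [div_le_iff₀ hQpos]; linarith
      linarith
    have := Real.log_le_log (by positivity) h3
    linarith
end
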